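/- arXiv:1801.01026 — 2 statements merged into one kernel-verified Lean document; each statement's English description precedes it below -/
import Mathlib

section
/- Let n ≥ 2 and let α_1,…,α_n > 0 be real numbers. Let u : D_α → [0,1) be such that log u is plurisubharmonic on D_α, and suppose u(a) = 0 for some a ∈ D_α with a_n = 0. Then u(z_1,…,z_{n-1},0) = 0 for all (z_1,…,z_{n-1}) ∈ ℂ^{n-1}. -/
open Complex Set Metric
open scoped Classical

noncomputable section

/-- Extended-real logarithm, with value `⊥ = -∞` at `0` (and at negative inputs). -/
noncomputable def erealLog (x : ℝ) : EReal := if x ≤ 0 then (⊥ : EReal) else ((Real.log x : ℝ) : EReal)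

/-- Subharmonicity of an `EReal`-valued function on a subset of `ℂ`, formulated via the
classical comparison property with harmonic functions (it suffices to compare with real
parts of complex polynomials): `w` is upper semicontinuous and for every closed disc
contained in `U` and every polynomial `p`, if `w ≤ Re p` on the boundary circle then
`w ≤ Re p` on the whole disc. -/
def SubharmonicOnE (w : ℂ → EReal) (U : Set ℂ) : Prop :=
  UpperSemicontinuousOn w U ∧
  ∀ (c : ℂ) (r : ℝ), 0 < r → closedBall c r ⊆ U →
    ∀ p : Polynomial ℂ,
      (∀ ζ ∈ sphere c r, w ζ ≤ (((p.eval ζ).re : ℝ) : EReal)) →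
      ∀ ζ ∈ closedBall c r, w ζ ≤ (((p.eval ζ).re : ℝ) : EReal)

/-- Plurisubharmonicity of an `EReal`-valued function on a subset of `ℂⁿ`:
upper semicontinuity together with subharmonicity of the restriction to every complex line. -/
def PlurisubharmonicOnE {m : ℕ} (w : (Fin m → ℂ) → EReal) (G : Set (Fin m → ℂ)) : Prop :=
  UpperSemicontinuousOn w G ∧
  ∀ a b : Fin m → ℂ,
    SubharmonicOnE (fun lam => w (a + lam • b)) {lam : ℂ | a + lam • b ∈ G}

/-- The Sibony class `S_G(a)`: functions `u : G → [0,1)` with `log u` plurisubharmonic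
on `G`, `u a = 0`, and `u` of class `C²` in some neighborhood of `a`. -/
def SibonyClass {m : ℕ} (G : Set (Fin m → ℂ)) (a : Fin m → ℂ) (u : (Fin m → ℂ) → ℝ) : Prop :=
  (∀ z ∈ G, u z ∈ Ico (0 : ℝ) 1) ∧
  PlurisubharmonicOnE (fun z => erealLog (u z)) G ∧
  u a = 0 ∧
  ∃ V : Set (Fin m → ℂ), IsOpen V ∧ a ∈ V ∧ V ⊆ G ∧ ContDiffOn ℝ 2 u V

/-- The Sibony function `s_G(a,z) = sup {√(u z) : u ∈ S_G(a)}`. -/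
noncomputable def sibonyFn {m : ℕ} (G : Set (Fin m → ℂ)) (a z : Fin m → ℂ) : ℝ :=
  sSup {t : ℝ | ∃ u, SibonyClass G a u ∧ t = Real.sqrt (u z)}

/-- The Möbius pseudodistance `m_G(a,z) = sup {|f z| : f : G → 𝔻 holomorphic, f a = 0}`. -/
noncomputable def mobiusFn {m : ℕ} (G : Set (Fin m → ℂ)) (a z : Fin m → ℂ) : ℝ :=
  sSup {t : ℝ | ∃ f : (Fin m → ℂ) → ℂ, DifferentiableOn ℂ f G ∧
    (∀ w ∈ G, ‖f w‖ < 1) ∧ f a = 0 ∧ t = ‖f z‖}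

/-- The pluricomplex Green function
`g_G(a,z) = sup {u z : u : G → [0,1), log u psh on G, sup_{w ≠ a} u w / ‖w - a‖ < ∞}`. -/
noncomputable def greenFn {m : ℕ} (G : Set (Fin m → ℂ)) (a z : Fin m → ℂ) : ℝ :=
  sSup {t : ℝ | ∃ u : (Fin m → ℂ) → ℝ,
    (∀ w ∈ G, u w ∈ Ico (0 : ℝ) 1) ∧
    PlurisubharmonicOnE (fun w => erealLog (u w)) G ∧
    (∃ C : ℝ, ∀ w ∈ G, w ≠ a → u w ≤ C * ‖w - a‖) ∧
    t = u z}

/-- `|z^α| = |z_1|^{α_1} ⋯ |z_n|^{α_n}` (real powers). -/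
noncomputable def absPow {m : ℕ} (α : Fin m → ℝ) (z : Fin m → ℂ) : ℝ :=
  ∏ j, ‖z j‖ ^ (α j)

/-- The elementary Reinhardt domain
`D_α = {z ∈ ℂⁿ(α) : |z^α| < 1}`, where `ℂⁿ(α) = {z : z_j ≠ 0 whenever α_j < 0}`. -/
def reinhardt {m : ℕ} (α : Fin m → ℝ) : Set (Fin m → ℂ) :=
  {z | (∀ j, α j < 0 → z j ≠ 0) ∧ absPow α z < 1}

/-- `σ(a) = #{j : α_j > 0 and a_j = 0}`. -/
noncomputable def sigmaCnt {m : ℕ} (α : Fin m → ℝ) (a : Fin m → ℂ) : ℕ :=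
  Set.ncard {j : Fin m | 0 < α j ∧ a j = 0}

/-- `μ(a) = min {α_j : α_j > 0, a_j = 0}`. -/
noncomputable def muMin {m : ℕ} (α : Fin m → ℝ) (a : Fin m → ℂ) : ℝ :=
  sInf {t : ℝ | ∃ j, 0 < α j ∧ a j = 0 ∧ t = α j}

/-- `r(a) = 1` if `σ(a) = 0`, and `r(a) = Σ_{j : α_j > 0, a_j = 0} α_j` otherwise. -/
noncomputable def rExp {m : ℕ} (α : Fin m → ℝ) (a : Fin m → ℂ) : ℝ :=
  if sigmaCnt α a = 0 then 1 else ∑ j, if 0 < α j ∧ a j = 0 then α j else 0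

/-- The Möbius distance on the unit disc: `m_𝔻(a,z) = |(z - a)/(1 - conj a * z)|`. -/
noncomputable def mobiusDisc (a z : ℂ) : ℝ :=
  ‖(z - a) / (1 - (starRingEnd ℂ) a * z)‖

/-- `z^α = z_1^{α_1} ⋯ z_n^{α_n}` for integer exponents. -/
noncomputable def zpowProd {m : ℕ} (α : Fin m → ℤ) (z : Fin m → ℂ) : ℂ :=
  ∏ j, z j ^ (α j)

end

/-!
On a complex line through `a` inside the hyperplane `z_n = 0`, which lies in `D_α`, `log u`
restricts to a subharmonic function `w ≤ 0` on all of `ℂ` with `w 0 = -∞`. If `w ≤ -M` on the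
disc `‖ζ‖ ≤ d`, comparing `w` on the annulus `d ≤ ‖ζ‖ ≤ ‖z‖²/d` with the harmonic function of
`log ‖ζ‖` that is `-M` on the inner and `0` on the outer circle gives `w z ≤ -M/2`; letting
`M → ∞` gives `w z = -∞`.

The comparison is a maximum principle for subharmonicity defined by polynomial majorants on
discs. At the maximiser `z₀` of `w - g` with largest real part, `w - g` is uniformly below its
maximum on the right arc of a small circle around `z₀`. Approximating `g` there by the real part
of a polynomial and adding a small multiple of the bump `-(1 + (ζ - z₀)/ρ)³`, which is `≥ 0`
off that arc, gives a polynomial majorant of `w` on the circle that lies strictly below `w z₀`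
at the centre.
-/

open Polynomial
open scoped NNReal ENNReal Topology

theorem FormalMultilinearSeries.partialSum_eq_eval {𝕜 : Type*} [NontriviallyNormedField 𝕜]
    (p : FormalMultilinearSeries 𝕜 𝕜 𝕜) (N : ℕ) (c ζ : 𝕜) :
    p.partialSum N (ζ - c) = (∑ k ∈ Finset.range N, C (p.coeff k) * (X - C c) ^ k).eval ζ := by
  simp only [partialSum, apply_eq_pow_smul_coeff, smul_eq_mul, eval_finsetSum, eval_mul,
    eval_C, eval_pow, eval_sub, eval_X]
  exact Finset.sum_congr rfl fun k _ => mul_comm _ _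

theorem DifferentiableOn.exists_polynomial_norm_sub_le {F : ℂ → ℂ} {c : ℂ} {R ρ ε : ℝ}
    (hF : DifferentiableOn ℂ F (closedBall c R)) (hρ : 0 ≤ ρ) (hρR : ρ < R) (hε : 0 < ε) :
    ∃ P : ℂ[X], ∀ ζ ∈ closedBall c ρ, ‖P.eval ζ - F ζ‖ ≤ ε := by
  lift R to ℝ≥0 using by linarith
  have hps := hF.hasFPowerSeriesOnBall (by exact_mod_cast hρ.trans_lt hρR)
  let ρ' : ℝ≥0 := ⟨(ρ + R) / 2, by positivity⟩
  have hρ' : (ρ' : ℝ≥0∞) < R := by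
    rw [ENNReal.coe_lt_coe, ← NNReal.coe_lt_coe]
    change (ρ + R) / 2 < R
    linarith
  obtain ⟨N, hN⟩ :=
    (Metric.tendstoUniformlyOn_iff.mp (hps.tendstoUniformlyOn' hρ') ε hε).exists
  refine ⟨∑ k ∈ Finset.range N, C ((cauchyPowerSeries F c R).coeff k) * (X - C c) ^ k,
    fun ζ hζ => ?_⟩
  rw [← FormalMultilinearSeries.partialSum_eq_eval, ← dist_eq_norm, dist_comm]
  refine (hN ζ (mem_ball.mpr ((mem_closedBall.mp hζ).trans_lt ?_))).le
  change ρ < (ρ + R) / 2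
  linarith

theorem Complex.re_one_add_pow_three_nonpos {μ : ℂ} (hμ : ‖μ‖ = 1) (hre : μ.re ≤ 1 / 2) :
    ((1 + μ) ^ 3).re ≤ 0 := by
  have hsq : μ.re ^ 2 + μ.im ^ 2 = 1 := by
    linarith [hμ ▸ sq_norm_sub_sq_re μ]
  have hcube : ((1 + μ) ^ 3).re = 2 * (1 + μ.re) ^ 2 * (2 * μ.re - 1) := by
    simp only [pow_succ, pow_zero, one_mul, mul_re, mul_im, add_re, add_im, one_re, one_im]
    linear_combination (-3 - 3 * μ.re) * hsq
  rw [hcube]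
  exact mul_nonpos_of_nonneg_of_nonpos (by positivity) (by linarith)

theorem Complex.re_one_add_pow_three_le {μ : ℂ} (hμ : ‖μ‖ ≤ 1) : ((1 + μ) ^ 3).re ≤ 8 :=
  calc ((1 + μ) ^ 3).re ≤ ‖1 + μ‖ ^ 3 := by rw [← norm_pow]; exact re_le_norm _
    _ ≤ (1 + 1) ^ 3 := by
      gcongr
      exact (norm_add_le _ _).trans (by rw [norm_one]; gcongr)
    _ = 8 := by norm_num

theorem lt_re_of_le_re_on_sphere_of_gap_on_arc {w : ℂ → EReal} {F : ℂ → ℂ} {z₀ : ℂ}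
    {ρ R η : ℝ} (hρ : 0 < ρ) (hρR : ρ < R) (hF : DifferentiableOn ℂ F (closedBall z₀ R))
    (hcomp : ∀ p : ℂ[X], (∀ ζ ∈ sphere z₀ ρ, w ζ ≤ ((p.eval ζ).re : EReal)) →
      w z₀ ≤ ((p.eval z₀).re : EReal))
    (hη : 0 < η) (hsphere : ∀ ζ ∈ sphere z₀ ρ, w ζ ≤ ((F ζ).re : EReal))
    (harc : ∀ ζ ∈ sphere z₀ ρ, ρ / 2 ≤ (ζ - z₀).re → w ζ ≤ (((F ζ).re - η : ℝ) : EReal)) :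
    w z₀ < ((F z₀).re : EReal) := by
  obtain ⟨P, hP⟩ := hF.exists_polynomial_norm_sub_le hρ.le hρR (ε := η / 32) (by positivity)
  have hPF : ∀ ζ ∈ closedBall z₀ ρ, |(P.eval ζ).re - (F ζ).re| ≤ η / 32 := fun ζ hζ =>
    (sub_re _ _ ▸ abs_re_le_norm _).trans (hP ζ hζ)
  let p : ℂ[X] :=
    P + C ((η / 32 : ℝ) : ℂ) - C ((η / 8 : ℝ) : ℂ) * (1 + C ((ρ : ℂ)⁻¹) * (X - C z₀)) ^ 3
  have hp : ∀ ζ, (p.eval ζ).re =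
      (P.eval ζ).re + η / 32 - η / 8 * ((1 + (ζ - z₀) / ρ) ^ 3).re := by
    intro ζ
    simp [p, div_eq_inv_mul]
  have hbound : ∀ ζ ∈ sphere z₀ ρ, w ζ ≤ ((p.eval ζ).re : EReal) := by
    intro ζ hζ
    have hPζ := abs_le.mp (hPF ζ (sphere_subset_closedBall hζ))
    have hμ : ‖(ζ - z₀) / ρ‖ = 1 := by
      rw [norm_div, ← dist_eq_norm, mem_sphere.mp hζ, norm_real, Real.norm_of_nonneg hρ.le,
        div_self hρ.ne']
    rw [hp]
    by_cases hre : ((ζ - z₀) / ρ).re ≤ 1 / 2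
    · have := re_one_add_pow_three_nonpos hμ hre
      exact (hsphere ζ hζ).trans (EReal.coe_le_coe_iff.mpr (by nlinarith))
    · have harc' : ρ / 2 ≤ (ζ - z₀).re := by
        rw [div_ofReal_re, not_le, lt_div_iff₀ hρ] at hre
        linarith
      have := re_one_add_pow_three_le hμ.le
      exact (harc ζ hζ harc').trans (EReal.coe_le_coe_iff.mpr (by nlinarith))
  have hcenter := hcomp p hbound
  have hPz₀ := abs_le.mp (hPF z₀ (mem_closedBall_self hρ.le))
  refine hcenter.trans_lt (EReal.coe_lt_coe_iff.mpr ?_)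
  rw [hp, sub_self, zero_div, add_zero, one_pow, one_re]
  linarith

theorem EReal.sub_coe_le_coe_iff {x : EReal} {a b : ℝ} :
    x - a ≤ b ↔ x ≤ ((a + b : ℝ) : EReal) := by
  rw [EReal.sub_le_iff_le_add (.inl (coe_ne_bot a)) (.inl (coe_ne_top a)), add_comm, coe_add]

theorem EReal.coe_le_sub_coe_iff {x : EReal} {a b : ℝ} :
    (b : EReal) ≤ x - a ↔ ((a + b : ℝ) : EReal) ≤ x := by
  rw [EReal.le_sub_iff_add_le (.inl (coe_ne_bot a)) (.inl (coe_ne_top a)), add_comm, coe_add]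

theorem UpperSemicontinuousOn.sub_coe {α : Type*} [TopologicalSpace α] {f : α → EReal}
    {g : α → ℝ} {s : Set α} (hf : UpperSemicontinuousOn f s) (hg : ContinuousOn g s) :
    UpperSemicontinuousOn (fun x => f x - g x) s := by
  have hg' : UpperSemicontinuousOn (fun x => ((-g x : ℝ) : EReal)) s :=
    (continuous_coe_real_ereal.comp_continuousOn hg.neg).upperSemicontinuousOn
  simpa only [sub_eq_add_neg, EReal.coe_neg] using hf.add' hg' fun x _ =>
    EReal.continuousAt_add (.inr (EReal.coe_ne_bot _)) (.inr (EReal.coe_ne_top _))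

theorem IsCompact.exists_pos_forall_le_sub_of_lt {α : Type*} [TopologicalSpace α] {f : α → EReal}
    {g : α → ℝ} {A : Set α} (hA : IsCompact A) (hf : UpperSemicontinuousOn f A)
    (hg : ContinuousOn g A) (hlt : ∀ x ∈ A, f x < g x) :
    ∃ η : ℝ, 0 < η ∧ ∀ x ∈ A, f x ≤ ((g x - η : ℝ) : EReal) := by
  rcases A.eq_empty_or_nonempty with rfl | hne
  · exact ⟨1, one_pos, by simp⟩
  obtain ⟨x₁, hx₁, hmax⟩ := (hf.sub_coe hg).exists_isMaxOn hne hA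
  have hneg : f x₁ - g x₁ < ((0 : ℝ) : EReal) := by
    rw [← not_le, EReal.coe_le_sub_coe_iff, add_zero, not_le]
    exact hlt x₁ hx₁
  obtain ⟨y, hy₁, hy₀⟩ := exists_between hneg
  lift y to ℝ using ⟨ne_top_of_lt hy₀, ne_bot_of_gt hy₁⟩
  refine ⟨-y, neg_pos.mpr (EReal.coe_lt_coe_iff.mp hy₀), fun x hx => ?_⟩
  rw [sub_neg_eq_add, ← EReal.sub_coe_le_coe_iff]
  exact (hmax hx).trans hy₁.le

open InnerProductSpace in
theorem SubharmonicOnE.exists_re_gt_of_forall_le {w : ℂ → EReal} {U K : Set ℂ} {g : ℂ → ℝ}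
    {z₀ : ℂ} {s : ℝ} (hw : SubharmonicOnE w U) (hKU : K ⊆ U) (hg : HarmonicOnNhd g (interior K))
    (hz₀ : z₀ ∈ interior K) (hle : ∀ z ∈ K, w z ≤ ((g z + s : ℝ) : EReal))
    (hz₀s : ((g z₀ + s : ℝ) : EReal) ≤ w z₀) :
    ∃ ζ ∈ K, z₀.re < ζ.re ∧ ((g ζ + s : ℝ) : EReal) ≤ w ζ := by
  by_contra! hright
  obtain ⟨r, hr, hball⟩ := Metric.isOpen_iff.mp isOpen_interior z₀ hz₀
  obtain ⟨F, hFan, hFre⟩ := (hg.mono hball).exists_analyticOnNhd_ball_re_eq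
  have hballK : ball z₀ r ⊆ K := hball.trans interior_subset
  have hρ : 0 < r / 4 := by positivity
  have hsphere : sphere z₀ (r / 4) ⊆ ball z₀ r :=
    sphere_subset_closedBall.trans (closedBall_subset_ball (by linarith))
  let A := sphere z₀ (r / 4) ∩ {ζ | r / 4 / 2 ≤ (ζ - z₀).re}
  have hA : IsCompact A := (isCompact_sphere z₀ _).inter_right
    (isClosed_le continuous_const (continuous_re.comp (continuous_id.sub continuous_const)))
  have hAball : A ⊆ ball z₀ r := inter_subset_left.trans hsphere
  obtain ⟨η, hη, hgap⟩ := hA.exists_pos_forall_le_sub_of_lt (g := fun ζ => g ζ + s)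
    (hw.1.mono (hAball.trans hballK |>.trans hKU))
    ((hg.mono hball).contDiffOn.continuousOn.mono hAball |>.add continuousOn_const)
    fun ζ hζ => hright ζ (hballK (hAball hζ))
      (by linarith [show r / 4 / 2 ≤ (ζ - z₀).re from hζ.2, sub_re ζ z₀])
  have hFg : ∀ ζ ∈ ball z₀ r, (F ζ + s).re = g ζ + s := fun ζ hζ => by
    rw [add_re, ofReal_re, ← hFre hζ]
  have hlt := lt_re_of_le_re_on_sphere_of_gap_on_arc (F := fun ζ => F ζ + s) (R := r / 2) hρ
    (by linarith)
    ((hFan.differentiableOn.mono (closedBall_subset_ball (by linarith))).add_const _)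
    (fun p hp => hw.2 z₀ _ hρ (closedBall_subset_ball (by linarith) |>.trans hballK |>.trans hKU)
      p hp z₀ (mem_closedBall_self hρ.le))
    hη (fun ζ hζ => hFg ζ (hsphere hζ) ▸ hle ζ (hballK (hsphere hζ)))
    (fun ζ hζ hre => hFg ζ (hsphere hζ) ▸ hgap ζ ⟨hζ, hre⟩)
  rw [hFg z₀ (mem_ball_self hr)] at hlt
  exact hlt.not_ge hz₀s

open InnerProductSpace in
theorem SubharmonicOnE.le_of_forall_frontier_le {w : ℂ → EReal} {U K : Set ℂ} {g : ℂ → ℝ}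
    (hw : SubharmonicOnE w U) (hKU : K ⊆ U) (hK : IsCompact K) (hw_top : ∀ z ∈ K, w z ≠ ⊤)
    (hg : ContinuousOn g K) (hgh : HarmonicOnNhd g (interior K))
    (hfr : ∀ z ∈ frontier K, w z ≤ g z) : ∀ z ∈ K, w z ≤ g z := by
  by_contra! ⟨z₁, hz₁K, hz₁⟩
  have hv := (hw.1.mono hKU).sub_coe hg
  obtain ⟨zm, hzmK, hmax⟩ := hv.exists_isMaxOn ⟨z₁, hz₁K⟩ hK
  have hpos : ((0 : ℝ) : EReal) < w zm - g zm := (hmax hz₁K).trans_lt' <| lt_of_not_ge <| by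
    rw [EReal.sub_coe_le_coe_iff, add_zero]
    exact hz₁.not_ge
  obtain ⟨a, ha⟩ : ∃ a : ℝ, w zm = a := ⟨_, (EReal.coe_toReal (hw_top zm hzmK) fun h => by
    simp [h] at hpos).symm⟩
  set s := a - g zm
  have hs : w zm - g zm = s := by rw [ha, ← EReal.coe_sub]
  have hle : ∀ z ∈ K, w z ≤ ((g z + s : ℝ) : EReal) := fun z hz =>
    EReal.sub_coe_le_coe_iff.mp (hs ▸ hmax hz)
  obtain ⟨z₀, ⟨hz₀K, hz₀s⟩, hz₀max⟩ := (hv.isCompact_inter_preimage_Ici hK s).exists_isMaxOn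
    ⟨zm, hzmK, hs.ge⟩ continuous_re.continuousOn
  replace hz₀s : ((g z₀ + s : ℝ) : EReal) ≤ w z₀ := EReal.coe_le_sub_coe_iff.mp hz₀s
  have hz₀int : z₀ ∈ interior K := by
    by_contra hint
    have hs₀ : (0 : ℝ) < s := EReal.coe_lt_coe_iff.mp (hs ▸ hpos)
    have := EReal.coe_le_coe_iff.mp
      (hz₀s.trans (hfr z₀ (hK.isClosed.frontier_eq ▸ ⟨hz₀K, hint⟩)))
    linarith
  obtain ⟨ζ, hζK, hre, hζ⟩ := hw.exists_re_gt_of_forall_le hKU hgh hz₀int hle hz₀s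
  exact hre.not_ge (hz₀max ⟨hζK, EReal.coe_le_sub_coe_iff.mpr hζ⟩)

theorem norm_eq_or_norm_eq_of_mem_frontier_closedBall_diff_ball {E : Type*}
    [SeminormedAddCommGroup E] {d R : ℝ} {x : E}
    (hx : x ∈ frontier (closedBall (0 : E) R \ ball 0 d)) : ‖x‖ = d ∨ ‖x‖ = R := by
  have hK : IsClosed (closedBall (0 : E) R \ ball 0 d) := isClosed_closedBall.sdiff isOpen_ball
  rw [hK.frontier_eq] at hx
  obtain ⟨⟨hxR, hxd⟩, hint⟩ := hx
  have hopen : ball (0 : E) R \ closedBall 0 d ⊆ interior (closedBall 0 R \ ball 0 d) :=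
    interior_maximal (sdiff_subset_sdiff ball_subset_closedBall ball_subset_closedBall)
      (isOpen_ball.sdiff isClosed_closedBall)
  simp only [mem_closedBall_zero_iff, mem_ball_zero_iff, not_lt] at hxR hxd
  by_contra! hne
  exact hint (hopen ⟨mem_ball_zero_iff.mpr (hxR.lt_of_ne hne.2),
    fun h => hne.1 (le_antisymm (mem_closedBall_zero_iff.mp h) hxd)⟩)

open InnerProductSpace in
theorem SubharmonicOnE.le_half_of_le_on_closedBall {w : ℂ → EReal} (hw : SubharmonicOnE w univ)
    (hw₀ : ∀ z, w z ≤ 0) {M d : ℝ} {z : ℂ} (hd : 0 < d) (hdz : d < ‖z‖)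
    (hball : ∀ ζ ∈ closedBall (0 : ℂ) d, w ζ ≤ ((-M : ℝ) : EReal)) :
    w z ≤ ((-M / 2 : ℝ) : EReal) := by
  set L := Real.log ‖z‖ - Real.log d
  have hL : 0 < L := sub_pos.mpr (Real.log_lt_log hd hdz)
  set R := ‖z‖ ^ 2 / d
  have hR : Real.log R - Real.log d = 2 * L := by
    rw [Real.log_div (pow_pos (hd.trans hdz) 2).ne' hd.ne', Real.log_pow]
    ring
  -- `g` is harmonic off `0`, equal to `-M` on `‖ζ‖ = d`, to `0` on `‖ζ‖ = R` and to `-M/2` at `z`.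
  let g : ℂ → ℝ := fun ζ => M / (2 * L) * Real.log ‖ζ‖ + (-M - M / (2 * L) * Real.log d)
  have hg : ∀ ζ, g ζ = -M + M / (2 * L) * (Real.log ‖ζ‖ - Real.log d) := fun ζ => by ring
  let K := closedBall (0 : ℂ) R \ ball 0 d
  have hK₀ : ∀ ζ ∈ K, ζ ≠ 0 := fun ζ hζ h => hζ.2 (by simp [h, hd])
  have hzK : z ∈ K := by
    refine ⟨mem_closedBall_zero_iff.mpr ?_, by simpa using hdz.le⟩
    rw [le_div_iff₀ hd, sq]
    exact mul_le_mul_of_nonneg_left hdz.le (norm_nonneg z)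
  have hgc : ContinuousOn g K :=
    (continuousOn_const.mul (continuous_norm.continuousOn.log fun ζ hζ =>
      norm_ne_zero_iff.mpr (hK₀ ζ hζ))).add continuousOn_const
  have hgh : HarmonicOnNhd g (interior K) := fun ζ hζ =>
    ((analyticAt_id.harmonicAt_log_norm (hK₀ ζ (interior_subset hζ))).const_smul
      (c := M / (2 * L))).add (harmonicAt_const _)
  have hmax := hw.le_of_forall_frontier_le (subset_univ K)
    ((isCompact_closedBall 0 R).diff isOpen_ball)
    (fun ζ _ => ne_top_of_le_ne_top EReal.zero_ne_top (hw₀ ζ)) hgc hgh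
    (fun ζ hζ => by
      rcases norm_eq_or_norm_eq_of_mem_frontier_closedBall_diff_ball hζ with h | h
      · refine (hball ζ (mem_closedBall_zero_iff.mpr h.le)).trans (EReal.coe_le_coe_iff.mpr ?_)
        rw [hg, h, sub_self, mul_zero, add_zero]
      · refine (hw₀ ζ).trans (EReal.coe_nonneg.mpr ?_)
        rw [hg, h, hR]
        field_simp
        linarith)
    z hzK
  refine hmax.trans (EReal.coe_le_coe_iff.mpr (le_of_eq ?_))
  rw [hg]
  field_simp
  ring

theorem SubharmonicOnE.eq_bot_of_nonpos {w : ℂ → EReal} (hw : SubharmonicOnE w univ)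
    (hw₀ : ∀ z, w z ≤ 0) (h0 : w 0 = ⊥) (z : ℂ) : w z = ⊥ := by
  rcases eq_or_ne z 0 with rfl | hz
  · exact h0
  rw [EReal.eq_bot_iff_forall_lt]
  intro t
  have hnear : ∀ᶠ ζ in 𝓝 0, w ζ < ((-(2 - 2 * t) : ℝ) : EReal) := by
    simpa only [nhdsWithin_univ] using
      hw.1 0 (mem_univ 0) _ (by simp only [h0]; exact EReal.bot_lt_coe _)
  obtain ⟨ε, hε, hball⟩ := Metric.eventually_nhds_iff_ball.mp hnear
  have hd : 0 < min (ε / 2) (‖z‖ / 2) := lt_min (by positivity) (by positivity)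
  have hle := hw.le_half_of_le_on_closedBall (z := z) hw₀ hd
    ((min_le_right _ _).trans_lt (by linarith [norm_pos_iff.mpr hz]))
    fun ζ hζ => (hball ζ (closedBall_subset_ball ((min_le_left _ _).trans_lt (by linarith)) hζ)).le
  exact hle.trans_lt (EReal.coe_lt_coe_iff.mpr (by linarith))

theorem erealLog_eq_bot_iff {x : ℝ} : erealLog x = ⊥ ↔ x ≤ 0 := by
  unfold erealLog
  split_ifs with hx <;> simp [hx]

theorem erealLog_nonpos {x : ℝ} (hx : x ≤ 1) : erealLog x ≤ 0 := by
  unfold erealLog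
  split_ifs with h
  · exact bot_le
  · exact EReal.coe_nonpos.mpr (Real.log_nonpos (not_le.mp h).le hx)

theorem mem_reinhardt_of_apply_eq_zero {m : ℕ} {α : Fin m → ℝ} (hα : ∀ j, 0 < α j)
    {z : Fin m → ℂ} {j : Fin m} (hj : z j = 0) : z ∈ reinhardt α := by
  refine ⟨fun i hi => absurd (hα i) hi.not_gt, ?_⟩
  rw [absPow, Finset.prod_eq_zero (Finset.mem_univ j) (by rw [hj, norm_zero,
    Real.zero_rpow (hα j).ne'])]
  exact zero_lt_one

/-- Liouville-type vanishing: for `α_1,…,α_n > 0`, if `u : D_α → [0,1)` is log-plurisubharmonic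
and vanishes at some `a ∈ D_α` with `a_n = 0`, then `u` vanishes identically on
`ℂ^{n-1} × {0} ⊆ D_α`. -/
theorem log_psh_vanishes_on_hyperplane {n : ℕ} (hn : 2 ≤ n)
    (α : Fin n → ℝ) (hpos : ∀ j, 0 < α j)
    (u : (Fin n → ℂ) → ℝ)
    (hu01 : ∀ z ∈ reinhardt α, u z ∈ Ico (0 : ℝ) 1)
    (hpsh : PlurisubharmonicOnE (fun z => erealLog (u z)) (reinhardt α))
    (a : Fin n → ℂ)
    (han : a ⟨n - 1, by omega⟩ = 0) (hua : u a = 0) :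
    ∀ z : Fin n → ℂ, z ⟨n - 1, by omega⟩ = 0 → u z = 0 := by
  intro z hz
  have hline : ∀ t : ℂ, a + t • (z - a) ∈ reinhardt α := fun t =>
    mem_reinhardt_of_apply_eq_zero hpos (j := ⟨n - 1, by omega⟩) (by simp [han, hz])
  have hsub : SubharmonicOnE (fun t : ℂ => erealLog (u (a + t • (z - a)))) univ :=
    eq_univ_of_forall hline ▸ hpsh.2 a (z - a)
  have hbot := hsub.eq_bot_of_nonpos (fun t => erealLog_nonpos (hu01 _ (hline t)).2.le)
    (by simpa [hua] using erealLog_eq_bot_iff.mpr le_rfl) 1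
  rw [one_smul, add_sub_cancel, erealLog_eq_bot_iff] at hbot
  exact le_antisymm hbot (hu01 z (mem_reinhardt_of_apply_eq_zero hpos hz)).1
end

section
/- Let v : 𝔻 → [0,1) satisfy: log v is subharmonic on 𝔻, v(0) = 0, and v² is of class C² in some neighborhood of 0. Then v(ζ) ≤ |ζ| for every ζ ∈ 𝔻. -/
open Complex Set Metric
open scoped Classical

/-!
The comparison with real parts of polynomials that defines `SubharmonicOnE` extends, by Taylor
approximation, to real parts of holomorphic functions; in particular to `a log |ζ| + b` on discs
avoiding `0`. Adding the term `ε (r² - |ζ|²)`, whose negative is subharmonic, rules out an interior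
maximum of `log v` minus the comparison function on an annulus `ρ ≤ |ζ| ≤ r`, which gives the
maximum principle there. As `v²` is `C²` with a minimum at `0`, `v ≤ C |ζ|` near `0`; for `ρ`
small enough the boundary values `log (C ρ)` and `≤ 0` lie below `r log (|ζ| / r)`, so
`log v(ζ) ≤ r log (|ζ| / r)`, and `r → 1` gives `v(ζ) ≤ |ζ|`.
-/

open Filter Topology Polynomial Asymptotics

theorem EReal.le_coe_of_forall_pos_le_coe_add {x : EReal} {y : ℝ}
    (h : ∀ η > 0, x ≤ ((y + η : ℝ) : EReal)) : x ≤ y :=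
  EReal.le_of_forall_lt_iff_le.1 fun z hz => by
    simpa using h (z - y) (by simpa using hz)

theorem EReal.add_coe_neg_le_coe_iff {e : EReal} {a m : ℝ} :
    e + ((-a : ℝ) : EReal) ≤ m ↔ e ≤ ((a + m : ℝ) : EReal) := by
  induction e using EReal.rec with
  | bot => simp
  | top => simp [-EReal.coe_add]
  | coe x => norm_cast; constructor <;> intro h <;> linarith

theorem EReal.add_coe_neg_lt_coe_iff {e : EReal} {a m : ℝ} :
    e + ((-a : ℝ) : EReal) < m ↔ e < ((a + m : ℝ) : EReal) := by
  induction e using EReal.rec with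
  | bot => simp [-EReal.coe_add]
  | top => simp
  | coe x => norm_cast; constructor <;> intro h <;> linarith

theorem erealLog_le_coe_iff {x c : ℝ} : erealLog x ≤ c ↔ x ≤ Real.exp c := by
  unfold erealLog
  split_ifs with h
  · simpa using h.trans (Real.exp_pos c).le
  · rw [EReal.coe_le_coe_iff, Real.log_le_iff_le_exp (not_le.1 h)]

theorem IsCompact.le_of_strict_local_bound {α : Type*} [TopologicalSpace α] {K B : Set α}
    {w : α → EReal} {ψ : α → ℝ} (hK : IsCompact K) (hw : UpperSemicontinuousOn w K)
    (hw_top : ∀ z ∈ K, w z ≠ ⊤) (hψ : ContinuousOn ψ K) (hB : ∀ z ∈ K ∩ B, w z ≤ ψ z)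
    (hloc : ∀ z ∈ K \ B, ∃ S ⊆ K,
      ∀ m : ℝ, (∀ ζ ∈ S, w ζ ≤ (ψ ζ + m : ℝ)) → w z < (ψ z + m : ℝ)) :
    ∀ z ∈ K, w z ≤ ψ z := by
  intro z hz
  set F : α → EReal := fun x => w x + ((-ψ x : ℝ) : EReal)
  have hF : UpperSemicontinuousOn F K :=
    hw.add' (continuous_coe_real_ereal.comp_continuousOn hψ.neg).upperSemicontinuousOn
      fun x _ => EReal.continuousAt_add (.inr (EReal.coe_ne_bot _)) (.inr (EReal.coe_ne_top _))
  obtain ⟨z₀, hz₀K, hmax⟩ := hF.exists_isMaxOn ⟨z, hz⟩ hK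
  suffices F z₀ ≤ (0 : ℝ) by
    simpa using EReal.add_coe_neg_le_coe_iff.1 ((hmax hz).trans this)
  by_contra! hpos
  obtain ⟨m, hm⟩ : ∃ m : ℝ, F z₀ = m :=
    ⟨(F z₀).toReal, (EReal.coe_toReal (EReal.add_ne_top (hw_top z₀ hz₀K) (EReal.coe_ne_top _))
      (ne_bot_of_gt hpos)).symm⟩
  have hz₀B : z₀ ∉ B := fun h =>
    hpos.not_ge (EReal.add_coe_neg_le_coe_iff.2 (by simpa using hB z₀ ⟨hz₀K, h⟩))
  obtain ⟨S, hSK, hS⟩ := hloc z₀ ⟨hz₀K, hz₀B⟩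
  have := hS m fun ζ hζ => EReal.add_coe_neg_le_coe_iff.1 ((hmax (hSK hζ)).trans hm.le)
  exact (EReal.add_coe_neg_lt_coe_iff.2 this).ne hm

theorem Complex.exists_polynomial_norm_sub_le {G : ℂ → ℂ} {c : ℂ} {r R : ℝ}
    (hG : DifferentiableOn ℂ G (ball c R)) (hr : 0 ≤ r) (hrR : r < R) {η : ℝ} (hη : 0 < η) :
    ∃ P : ℂ[X], ∀ ζ ∈ closedBall c r, ‖G ζ - P.eval ζ‖ ≤ η := by
  set r₁ : NNReal := ⟨(3 * r + R) / 4, by linarith⟩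
  set r₂ : NNReal := ⟨(r + R) / 2, by linarith⟩
  have hps := (hG.mono (closedBall_subset_ball (show (r + R) / 2 < R by linarith))
    ).hasFPowerSeriesOnBall (R := r₂) (by rw [← NNReal.coe_pos]; show 0 < (r + R) / 2; linarith)
  have hunif := Metric.tendstoUniformlyOn_iff.1
    (hps.tendstoUniformlyOn' (r' := r₁) (by
      rw [ENNReal.coe_lt_coe, ← NNReal.coe_lt_coe]; show (3 * r + R) / 4 < (r + R) / 2; linarith))
  obtain ⟨n, hn⟩ := (hunif η hη).exists
  set p := cauchyPowerSeries G c r₂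
  refine ⟨∑ i ∈ Finset.range n, C (p.coeff i) * (X - C c) ^ i, fun ζ hζ => ?_⟩
  have hζ₁ : ζ ∈ ball c r₁ := by
    rw [mem_closedBall] at hζ; rw [mem_ball]; show dist ζ c < (3 * r + R) / 4; linarith
  have heval : (∑ i ∈ Finset.range n, C (p.coeff i) * (X - C c) ^ i).eval ζ
      = p.partialSum n (ζ - c) := by
    simp [eval_finsetSum, FormalMultilinearSeries.partialSum, mul_comm]
  rw [heval, ← dist_eq_norm]
  exact (hn ζ hζ₁).le

theorem Complex.differentiableOn_log_div (z : ℂ) :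
    DifferentiableOn ℂ (fun ζ => log (ζ / z)) (ball z ‖z‖) := by
  intro ζ hζ
  have hz : z ≠ 0 := by rintro rfl; simp at hζ
  have hslit : ζ / z ∈ slitPlane := by
    have := mem_slitPlane_of_norm_lt_one (z := (ζ - z) / z) (by
      rwa [norm_div, div_lt_one (norm_pos_iff.2 hz), ← dist_eq_norm])
    rwa [sub_div, div_self hz, add_sub_cancel] at this
  exact ((differentiableAt_log hslit).comp ζ (differentiableAt_id.div_const z)
    ).differentiableWithinAt

namespace SubharmonicOnE

variable {w : ℂ → EReal} {U : Set ℂ}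

theorem le_re_of_differentiableOn (hw : SubharmonicOnE w U) {c : ℂ} {r R : ℝ} (hr : 0 < r)
    (hU : closedBall c r ⊆ U) (hrR : r < R) {G : ℂ → ℂ} (hG : DifferentiableOn ℂ G (ball c R))
    (hle : ∀ ζ ∈ sphere c r, w ζ ≤ (G ζ).re) : ∀ ζ ∈ closedBall c r, w ζ ≤ (G ζ).re := by
  intro ζ hζ
  refine EReal.le_coe_of_forall_pos_le_coe_add fun η hη => ?_
  obtain ⟨P, hP⟩ := Complex.exists_polynomial_norm_sub_le hG hr.le hrR (half_pos hη)
  have hre : ∀ z ∈ closedBall c r, |(G z).re - (P.eval z).re| ≤ η / 2 := fun z hz =>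
    (sub_re (G z) _ ▸ abs_re_le_norm _).trans (hP z hz)
  have hQ : ∀ z, ((P + C ((η / 2 : ℝ) : ℂ)).eval z).re = (P.eval z).re + η / 2 := by simp
  have := hw.2 c r hr hU (P + C ((η / 2 : ℝ) : ℂ)) (fun z hz => (hle z hz).trans <| by
    rw [hQ, EReal.coe_le_coe_iff]
    linarith [(abs_le.1 (hre z (sphere_subset_closedBall hz))).2]) ζ hζ
  refine this.trans ?_
  rw [hQ, EReal.coe_le_coe_iff]
  linarith [(abs_le.1 (hre ζ hζ)).1]

theorem lt_re_sub_mul_sq_norm (hw : SubharmonicOnE w U) {z : ℂ} {δ R ε : ℝ} (hδ : 0 < δ)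
    (hU : closedBall z δ ⊆ U) (hδR : δ < R) {G : ℂ → ℂ} (hG : DifferentiableOn ℂ G (ball z R))
    (hε : 0 < ε) (hle : ∀ ζ ∈ sphere z δ, w ζ ≤ ((G ζ).re - ε * ‖ζ‖ ^ 2 : ℝ)) :
    w z < ((G z).re - ε * ‖z‖ ^ 2 : ℝ) := by
  -- on the circle `‖ζ - z‖ = δ`, `‖ζ‖²` is the real part of an affine function of `ζ`
  set H : ℂ → ℂ := fun ζ =>
    G ζ - ((ε * (‖z‖ ^ 2 + δ ^ 2) : ℝ) : ℂ) - ((2 * ε : ℝ) : ℂ) * (starRingEnd ℂ z * (ζ - z))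
  have hH : ∀ ζ, (H ζ).re
      = (G ζ).re - ε * (‖z‖ ^ 2 + 2 * (starRingEnd ℂ z * (ζ - z)).re + δ ^ 2) := by
    intro ζ
    simp only [H, sub_re, ofReal_re, re_ofReal_mul]
    ring
  have hsq : ∀ ζ, ‖ζ‖ ^ 2 = ‖z‖ ^ 2 + 2 * (starRingEnd ℂ z * (ζ - z)).re + ‖ζ - z‖ ^ 2 := by
    intro ζ
    have := norm_add_sq_real z (ζ - z)
    rwa [Complex.inner, add_sub_cancel, mul_comm (ζ - z)] at this
  have hHd : DifferentiableOn ℂ H (ball z R) :=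
    (hG.sub_const _).sub ((differentiableOn_id.sub_const z).const_mul _ |>.const_mul _)
  have := hw.le_re_of_differentiableOn hδ hU hδR hHd (fun ζ hζ => by
    rw [hH, ← mem_sphere_iff_norm.1 hζ, ← hsq]; exact hle ζ hζ) z (mem_closedBall_self hδ.le)
  refine this.trans_lt ?_
  rw [hH, EReal.coe_lt_coe_iff, sub_self, mul_zero, zero_re, mul_zero, add_zero]
  nlinarith [mul_pos hε (pow_pos hδ 2)]

theorem lt_mul_log_norm_add_sub_mul_sq_norm (hw : SubharmonicOnE w U) {z : ℂ} {δ a c ε : ℝ}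
    (hδ : 0 < δ) (hδz : δ < ‖z‖) (hU : closedBall z δ ⊆ U) (hε : 0 < ε)
    (hle : ∀ ζ ∈ sphere z δ, w ζ ≤ (a * Real.log ‖ζ‖ + c - ε * ‖ζ‖ ^ 2 : ℝ)) :
    w z < (a * Real.log ‖z‖ + c - ε * ‖z‖ ^ 2 : ℝ) := by
  set G : ℂ → ℂ := fun ζ => a * log (ζ / z) + (a * Real.log ‖z‖ + c : ℝ)
  have hz : 0 < ‖z‖ := hδ.trans hδz
  have hG : ∀ ζ ≠ 0, (G ζ).re = a * Real.log ‖ζ‖ + c := by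
    intro ζ hζ
    simp only [G, add_re, re_ofReal_mul, log_re, ofReal_re, norm_div]
    rw [Real.log_div (norm_ne_zero_iff.2 hζ) hz.ne']
    ring
  have hGd : DifferentiableOn ℂ G (ball z ‖z‖) :=
    ((differentiableOn_log_div z).const_mul _).add_const _
  have := hw.lt_re_sub_mul_sq_norm hδ hU hδz hGd hε fun ζ hζ => by
    have hζ0 : ζ ≠ 0 := by
      rintro rfl
      rw [mem_sphere_iff_norm, zero_sub, norm_neg] at hζ
      exact hδz.ne' hζ
    rw [hG ζ hζ0]; exact hle ζ hζ
  rwa [hG z (norm_pos_iff.1 hz)] at this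

theorem le_mul_log_norm_add_add_mul_on_annulus (hw : SubharmonicOnE w U) {ρ r a b ε : ℝ}
    (hρ : 0 < ρ) (hU : closedBall 0 r \ ball 0 ρ ⊆ U)
    (hw_top : ∀ ζ ∈ closedBall 0 r \ ball 0 ρ, w ζ ≠ ⊤) (hε : 0 < ε)
    (hρ_le : ∀ ζ ∈ sphere 0 ρ, w ζ ≤ (a * Real.log ‖ζ‖ + b : ℝ))
    (hr_le : ∀ ζ ∈ sphere 0 r, w ζ ≤ (a * Real.log ‖ζ‖ + b : ℝ)) :
    ∀ ζ ∈ closedBall 0 r \ ball 0 ρ,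
      w ζ ≤ (a * Real.log ‖ζ‖ + b + ε * (r ^ 2 - ‖ζ‖ ^ 2) : ℝ) := by
  have hmem : ∀ ζ, ζ ∈ closedBall (0 : ℂ) r \ ball 0 ρ ↔ ρ ≤ ‖ζ‖ ∧ ‖ζ‖ ≤ r := fun ζ => by
    simp [and_comm]
  refine IsCompact.le_of_strict_local_bound (B := sphere 0 ρ ∪ sphere 0 r)
    ((isCompact_closedBall 0 r).diff isOpen_ball) (hw.1.mono hU) hw_top ?_ ?_ ?_
  · refine ContinuousOn.add (ContinuousOn.add ?_ continuousOn_const) (by fun_prop)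
    exact (continuous_norm.continuousOn.log fun ζ hζ =>
      (hρ.trans_le ((hmem ζ).1 hζ).1).ne').const_smul a
  · rintro ζ ⟨hζ, hρζ | hrζ⟩
    · refine (hρ_le ζ hρζ).trans (EReal.coe_le_coe_iff.2 ?_)
      have := pow_le_pow_left₀ (norm_nonneg ζ) ((hmem ζ).1 hζ).2 2
      nlinarith
    · rw [mem_sphere_zero_iff_norm] at hrζ
      simpa [hrζ] using hr_le ζ (mem_sphere_zero_iff_norm.2 hrζ)
  · rintro z ⟨hzK, hzB⟩
    simp only [mem_union, mem_sphere_zero_iff_norm, not_or] at hzB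
    obtain ⟨hρz, hzr⟩ := (hmem z).1 hzK
    set δ := min (‖z‖ - ρ) (r - ‖z‖)
    have hδ : 0 < δ := lt_min (by grind) (by grind)
    have hball : closedBall z δ ⊆ closedBall 0 r \ ball 0 ρ := by
      intro ζ hζ
      rw [mem_closedBall, dist_eq_norm] at hζ
      have h₁ := norm_sub_norm_le z ζ
      have h₂ := norm_le_norm_add_norm_sub' ζ z
      rw [norm_sub_rev] at h₁
      exact (hmem ζ).2 ⟨by grind, by grind⟩
    refine ⟨sphere z δ, sphere_subset_closedBall.trans hball, fun m hm => ?_⟩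
    have := hw.lt_mul_log_norm_add_sub_mul_sq_norm (a := a) (c := b + ε * r ^ 2 + m) hδ
      (by grind) (hball.trans hU) hε fun ζ hζ => by
        convert hm ζ hζ using 2; ring
    convert this using 2; ring

theorem le_mul_log_norm_add_on_annulus (hw : SubharmonicOnE w U) {ρ r a b : ℝ}
    (hρ : 0 < ρ) (hU : closedBall 0 r \ ball 0 ρ ⊆ U)
    (hw_top : ∀ ζ ∈ closedBall 0 r \ ball 0 ρ, w ζ ≠ ⊤)
    (hρ_le : ∀ ζ ∈ sphere 0 ρ, w ζ ≤ (a * Real.log ‖ζ‖ + b : ℝ))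
    (hr_le : ∀ ζ ∈ sphere 0 r, w ζ ≤ (a * Real.log ‖ζ‖ + b : ℝ)) :
    ∀ ζ ∈ closedBall 0 r \ ball 0 ρ, w ζ ≤ (a * Real.log ‖ζ‖ + b : ℝ) := by
  intro ζ hζ
  obtain ⟨hζr, hρζ⟩ : ‖ζ‖ ≤ r ∧ ρ ≤ ‖ζ‖ := by simpa using hζ
  have hr : 0 < r := by linarith
  refine EReal.le_coe_of_forall_pos_le_coe_add fun η hη => ?_
  refine (hw.le_mul_log_norm_add_add_mul_on_annulus hρ hU hw_top (div_pos hη (pow_pos hr 2))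
    hρ_le hr_le ζ hζ).trans (EReal.coe_le_coe_iff.2 ?_)
  have : η / r ^ 2 * (r ^ 2 - ‖ζ‖ ^ 2) = η - η / r ^ 2 * ‖ζ‖ ^ 2 := by field_simp
  rw [add_le_add_iff_left, this, sub_le_self_iff]
  positivity

theorem le_mul_log_norm_sub_log (hw : SubharmonicOnE w (ball 0 1))
    (hw0 : ∀ ζ ∈ ball 0 1, w ζ ≤ 0) {c : ℝ} (hc : ∀ᶠ ζ in 𝓝[≠] 0, w ζ ≤ (c + Real.log ‖ζ‖ : ℝ))
    {ζ : ℂ} (hζ0 : ζ ≠ 0) {r : ℝ} (hζr : ‖ζ‖ < r) (hr1 : r < 1) :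
    w ζ ≤ (r * (Real.log ‖ζ‖ - Real.log r) : ℝ) := by
  obtain ⟨t, ht, hct⟩ := Metric.eventually_nhds_iff.1 (eventually_nhdsWithin_iff.1 hc)
  have hr : 0 < r := (norm_pos_iff.2 hζ0).trans hζr
  -- the inner radius is so small that `c + log ρ ≤ r * (log ρ - log r)`
  set ρ := min (min (t / 2) ‖ζ‖) (Real.exp ((-c - r * Real.log r) / (1 - r)))
  have hρ : 0 < ρ := lt_min (lt_min (half_pos ht) (norm_pos_iff.2 hζ0)) (Real.exp_pos _)
  have hρt : ρ < t := (min_le_left _ _).trans_lt ((min_le_left _ _).trans_lt (half_lt_self ht))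
  have hlogρ : (1 - r) * Real.log ρ ≤ -c - r * Real.log r := by
    rw [← le_div_iff₀' (by linarith), Real.log_le_iff_le_exp hρ]
    exact min_le_right _ _
  have hζK : ζ ∈ closedBall 0 r \ ball 0 ρ := by
    simpa using ⟨hζr.le, (min_le_left _ _).trans (min_le_right _ _)⟩
  have hK : closedBall 0 r \ ball 0 ρ ⊆ ball (0 : ℂ) 1 := fun z hz =>
    mem_ball_zero_iff.2 ((mem_closedBall_zero_iff.1 hz.1).trans_lt hr1)
  have := hw.le_mul_log_norm_add_on_annulus (a := r) (b := -r * Real.log r) hρ hK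
    (fun z hz => ((hw0 z (hK hz)).trans_lt (EReal.coe_lt_top 0)).ne) ?_ ?_ ζ hζK
  · convert this using 2; ring
  · intro z hz
    rw [mem_sphere_zero_iff_norm] at hz
    have hz0 : z ≠ 0 := norm_ne_zero_iff.1 (hz ▸ hρ.ne')
    refine (hct (by simpa [hz] using hρt) hz0).trans ?_
    rw [hz, EReal.coe_le_coe_iff]
    linarith
  · intro z hz
    rw [mem_sphere_zero_iff_norm] at hz
    refine (hw0 z (by simpa [hz] using hr1)).trans ?_
    simp [hz]

theorem le_log_norm (hw : SubharmonicOnE w (ball 0 1)) (hw0 : ∀ ζ ∈ ball 0 1, w ζ ≤ 0)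
    (hc : ∃ c : ℝ, ∀ᶠ ζ in 𝓝[≠] 0, w ζ ≤ (c + Real.log ‖ζ‖ : ℝ)) {ζ : ℂ} (hζ : ζ ∈ ball 0 1)
    (hζ0 : ζ ≠ 0) : w ζ ≤ Real.log ‖ζ‖ := by
  obtain ⟨c, hc⟩ := hc
  have hlim : Tendsto (fun r : ℝ => ((r * (Real.log ‖ζ‖ - Real.log r) : ℝ) : EReal)) (𝓝[<] 1)
      (𝓝 (Real.log ‖ζ‖)) := by
    refine EReal.tendsto_coe.2 (Tendsto.mono_left ?_ nhdsWithin_le_nhds)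
    simpa using tendsto_id.mul (tendsto_const_nhds.sub (Real.continuousAt_log one_ne_zero).tendsto)
  refine ge_of_tendsto hlim (eventually_of_mem (Ioo_mem_nhdsLT (mem_ball_zero_iff.1 hζ)) ?_)
  exact fun r hr => hw.le_mul_log_norm_sub_log hw0 hc hζ0 hr.1 hr.2

end SubharmonicOnE

theorem ContDiffAt.isBigO_sub_of_fderiv_eq_zero {E F : Type*} [NormedAddCommGroup E]
    [NormedSpace ℝ E] [NormedAddCommGroup F] [NormedSpace ℝ F] {f : E → F} {x₀ : E}
    (hf : ContDiffAt ℝ 2 f x₀) (h0 : fderiv ℝ f x₀ = 0) :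
    (fun x => f x - f x₀) =O[𝓝 x₀] fun x => ‖x - x₀‖ ^ 2 := by
  obtain ⟨K, t, ht, hK⟩ := (hf.fderiv_right (m := 1) (by norm_num)).exists_lipschitzOnWith
  have hdiff : ∀ᶠ x in 𝓝 x₀, DifferentiableAt ℝ f x :=
    (hf.eventually (by simp)).mono fun x hx => hx.differentiableAt (by norm_num)
  obtain ⟨ε, hε, hball⟩ := Metric.mem_nhds_iff.1 (inter_mem ht hdiff)
  refine IsBigO.of_bound K (eventually_of_mem (ball_mem_nhds x₀ hε) fun x hx => ?_)
  have hsub : closedBall x₀ ‖x - x₀‖ ⊆ ball x₀ ε :=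
    closedBall_subset_ball (by rwa [← dist_eq_norm, ← mem_ball])
  have hbound : ∀ y ∈ closedBall x₀ ‖x - x₀‖, ‖fderiv ℝ f y‖ ≤ K * ‖x - x₀‖ := fun y hy => by
    have := hK.norm_sub_le (hball (hsub hy)).1 (mem_of_mem_nhds ht)
    rw [h0, sub_zero] at this
    exact this.trans (by gcongr; rwa [← dist_eq_norm, ← mem_closedBall])
  have := (convex_closedBall x₀ ‖x - x₀‖).norm_image_sub_le_of_norm_fderiv_le
    (fun y hy => (hball (hsub hy)).2) hbound (mem_closedBall_self (norm_nonneg _))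
    (by rw [mem_closedBall, dist_eq_norm])
  simpa [sq, mul_assoc] using this

theorem exists_pos_le_mul_norm_of_contDiffAt_sq {E : Type*} [NormedAddCommGroup E]
    [NormedSpace ℝ E] {v : E → ℝ} {x₀ : E} (hv : ContDiffAt ℝ 2 (fun x => v x ^ 2) x₀)
    (hv0 : v x₀ = 0) : ∃ C > 0, ∀ᶠ x in 𝓝 x₀, v x ≤ C * ‖x - x₀‖ := by
  have hmin : IsLocalMin (fun x => v x ^ 2) x₀ :=
    Eventually.of_forall fun x => show v x₀ ^ 2 ≤ v x ^ 2 by simpa [hv0] using sq_nonneg (v x)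
  obtain ⟨c, hc, hO⟩ := (hv.isBigO_sub_of_fderiv_eq_zero hmin.fderiv_eq_zero).exists_pos
  refine ⟨√c, Real.sqrt_pos.2 hc, hO.bound.mono fun x hx => ?_⟩
  simp only [hv0, norm_pow, Real.norm_eq_abs, abs_norm, sq (0 : ℝ), mul_zero, sub_zero] at hx
  refine le_of_sq_le_sq ?_ (by positivity)
  rw [mul_pow, Real.sq_sqrt hc.le]
  simpa using hx

/-- Schwarz-type lemma: if `v : 𝔻 → [0,1)` is log-subharmonic with `v 0 = 0` and `v²` of
class `C²` near `0`, then `v(ζ) ≤ |ζ|` on `𝔻`. -/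
theorem log_subharmonic_schwarz (v : ℂ → ℝ)
    (hv01 : ∀ ζ ∈ ball (0 : ℂ) 1, v ζ ∈ Ico (0 : ℝ) 1)
    (hsub : SubharmonicOnE (fun ζ => erealLog (v ζ)) (ball (0 : ℂ) 1))
    (hv0 : v 0 = 0)
    (hC2 : ∃ V : Set ℂ, IsOpen V ∧ (0 : ℂ) ∈ V ∧ V ⊆ ball (0 : ℂ) 1 ∧
      ContDiffOn ℝ 2 (fun ζ => (v ζ) ^ 2) V) :
    ∀ ζ ∈ ball (0 : ℂ) 1, v ζ ≤ ‖ζ‖ := by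
  obtain ⟨V, hVo, hV0, -, hC2⟩ := hC2
  obtain ⟨C, hC, hvC⟩ :=
    exists_pos_le_mul_norm_of_contDiffAt_sq (hC2.contDiffAt (hVo.mem_nhds hV0)) hv0
  have hw0 : ∀ ζ ∈ ball (0 : ℂ) 1, erealLog (v ζ) ≤ 0 := fun ζ hζ => by
    simpa using erealLog_le_coe_iff.2 ((hv01 ζ hζ).2.le.trans (Real.exp_zero).ge)
  have hwC : ∀ᶠ ζ in 𝓝[≠] 0, erealLog (v ζ) ≤ (Real.log C + Real.log ‖ζ‖ : ℝ) := by
    filter_upwards [nhdsWithin_le_nhds hvC, self_mem_nhdsWithin] with ζ hζ hζ0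
    rw [erealLog_le_coe_iff, Real.exp_add, Real.exp_log hC, Real.exp_log (norm_pos_iff.2 hζ0)]
    simpa using hζ
  intro ζ hζ
  rcases eq_or_ne ζ 0 with rfl | hζ0
  · simp [hv0]
  · simpa [erealLog_le_coe_iff, Real.exp_log (norm_pos_iff.2 hζ0)] using
      hsub.le_log_norm hw0 ⟨_, hwC⟩ hζ hζ0
end
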